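/- For a rooted binary tree shape t with s leaves, the number of rooted binary phylogenetic trees on leaf set [s] having shape t is s!/2^m, where m is the number of symmetry vertices of t, and consequently this number is at least s!/2^(s-1). -/
import Mathlib


/-- Plane (ordered) rooted binary trees with leaves labelled by `α`. -/
inductive RTree (α : Type) : Type
  | leaf : α → RTree α
  | node : RTree α → RTree α → RTree α

namespace RTree

/-- The multiset of leaf labels of a tree. -/
def labels {α : Type} : RTree α → Multiset α
  | .leaf a => {a}
  | .node l r => labels l + labels r

/-- Relabelling of leaves. -/
def map {α β : Type} (f : α → β) : RTree α → RTree β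
  | .leaf a => .leaf (f a)
  | .node l r => .node (map f l) (map f r)

/-- Two plane trees represent the same rooted binary phylogenetic tree
(equality up to swapping the two children at internal vertices). -/
inductive Iso {α : Type} : RTree α → RTree α → Prop
  | leaf (a : α) : Iso (.leaf a) (.leaf a)
  | node {l₁ r₁ l₂ r₂ : RTree α} : Iso l₁ l₂ → Iso r₁ r₂ →
      Iso (.node l₁ r₁) (.node l₂ r₂)
  | swap {l₁ r₁ l₂ r₂ : RTree α} : Iso l₁ l₂ → Iso r₁ r₂ →
      Iso (.node l₁ r₁) (.node r₂ l₂)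

theorem Iso.labels_eq {α : Type} {t₁ t₂ : RTree α} (h : Iso t₁ t₂) :
    t₁.labels = t₂.labels := by
  induction h with
  | leaf a => rfl
  | node _ _ ih₁ ih₂ => simp [labels, ih₁, ih₂]
  | swap _ _ ih₁ ih₂ => simp [labels, ih₁, ih₂, add_comm]

/-- Restriction of a tree to the leaves in `S`, suppressing degree-two
vertices (`none` if no leaf of the tree lies in `S`). -/
def restrict {α : Type} [DecidableEq α] (S : Finset α) :
    RTree α → Option (RTree α)
  | .leaf a => if a ∈ S then some (.leaf a) else none
  | .node l r =>
    match restrict S l, restrict S r with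
    | some l', some r' => some (.node l' r')
    | some l', none => some l'
    | none, o => o

end RTree

/-- Equality of optional trees as phylogenetic trees. -/
def OptIso {α : Type} : Option (RTree α) → Option (RTree α) → Prop
  | some t₁, some t₂ => RTree.Iso t₁ t₂
  | none, none => True
  | _, _ => False

/-- Rooted binary phylogenetic trees: plane trees up to swapping children. -/
def QTree (α : Type) : Type := Quot (@RTree.Iso α)

/-- Leaf labels of an equivalence class of plane trees. -/
def QTree.labels {α : Type} : QTree α → Multiset α :=
  Quot.lift RTree.labels fun _ _ h => h.labels_eq

/-- The set of rooted binary phylogenetic trees with leaf label set `{1,…,n}`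
(each label used exactly once). -/
def RB (n : ℕ) : Type :=
  {T : QTree (Fin n) // T.labels = (Finset.univ : Finset (Fin n)).val}

/-- `T'` is obtained from `T` by permuting the leaf labels by `π`. -/
def IsRelabel (n : ℕ) (π : Equiv.Perm (Fin n)) (T T' : QTree (Fin n)) : Prop :=
  ∃ t : RTree (Fin n), Quot.mk _ t = T ∧ Quot.mk _ (t.map π) = T'

namespace RTree

/-- Number of leaves. -/
def nLeaves {α : Type} : RTree α → ℕ
  | .leaf _ => 1
  | .node l r => nLeaves l + nLeaves r

/-- Decision procedure for two unlabelled rooted binary trees having the same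
shape. -/
def sameShape : RTree Unit → RTree Unit → Bool
  | .leaf _, .leaf _ => true
  | .node l r, .node l' r' =>
      (sameShape l l' && sameShape r r') || (sameShape l r' && sameShape r l')
  | _, _ => false

/-- Forget the leaf labels, keeping only the shape. -/
def shape {α : Type} (t : RTree α) : RTree Unit := t.map fun _ => ()

/-- The number of symmetry vertices of a tree shape: internal vertices whose
two daughter subtrees have the same shape. -/
def symCount : RTree Unit → ℕ
  | .leaf _ => 0
  | .node l r => symCount l + symCount r + (if sameShape l r then 1 else 0)

end RTree

/-- The rooted binary phylogenetic tree `T` has shape `t`. -/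
def HasShape (s : ℕ) (t : RTree Unit) (T : RB s) : Prop :=
  ∃ r : RTree (Fin s), Quot.mk _ r = T.1 ∧ r.shape.sameShape t = true

namespace RTree

variable {α β : Type}

/-! ### Basic lemmas -/

theorem Iso.rfl : ∀ t : RTree α, Iso t t
  | .leaf a => .leaf a
  | .node l r => .node (Iso.rfl l) (Iso.rfl r)

theorem Iso.symm' {t₁ t₂ : RTree α} (h : Iso t₁ t₂) : Iso t₂ t₁ := by
  induction h with
  | leaf a => exact .leaf a
  | node _ _ ih₁ ih₂ => exact .node ih₁ ih₂
  | swap _ _ ih₁ ih₂ => exact .swap ih₂ ih₁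

theorem Iso.trans' {t₁ t₂ t₃ : RTree α} (h₁ : Iso t₁ t₂) (h₂ : Iso t₂ t₃) : Iso t₁ t₃ := by
  induction h₁ generalizing t₃ with
  | leaf a => exact h₂
  | node ha hb iha ihb =>
    cases h₂ with
    | node hc hd => exact .node (iha hc) (ihb hd)
    | swap hc hd => exact .swap (iha hc) (ihb hd)
  | swap ha hb iha ihb =>
    cases h₂ with
    | node hc hd => exact .swap (iha hd) (ihb hc)
    | swap hc hd => exact .node (iha hd) (ihb hc)

theorem iso_equivalence : Equivalence (@Iso α) :=
  ⟨Iso.rfl, Iso.symm', Iso.trans'⟩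

theorem quot_mk_eq_iff {t₁ t₂ : RTree α} :
    (Quot.mk Iso t₁ : QTree α) = Quot.mk Iso t₂ ↔ Iso t₁ t₂ := by
  rw [Quot.eq]
  exact (iso_equivalence.eqvGen_iff)

theorem iso_leaf {x : RTree α} {a : α} (h : Iso x (.leaf a)) : x = .leaf a := by
  cases h; rfl

theorem iso_node {x r₁ r₂ : RTree α} (h : Iso x (.node r₁ r₂)) :
    ∃ a b, x = .node a b ∧ ((Iso a r₁ ∧ Iso b r₂) ∨ (Iso a r₂ ∧ Iso b r₁)) := by
  cases h with
  | node h₁ h₂ => exact ⟨_, _, rfl, .inl ⟨h₁, h₂⟩⟩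
  | swap h₁ h₂ => exact ⟨_, _, rfl, .inr ⟨h₁, h₂⟩⟩

theorem shape_leaf (a : α) : (RTree.leaf a).shape = .leaf () := rfl

theorem shape_node (l r : RTree α) : (RTree.node l r).shape = .node l.shape r.shape := rfl

theorem nLeaves_shape : ∀ r : RTree α, r.shape.nLeaves = r.nLeaves
  | .leaf _ => rfl
  | .node l r => by
    show (shape l).nLeaves + (shape r).nLeaves = l.nLeaves + r.nLeaves
    rw [nLeaves_shape l, nLeaves_shape r]

theorem card_labels : ∀ r : RTree α, Multiset.card r.labels = r.nLeaves
  | .leaf _ => rfl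
  | .node l r => by
    simp only [labels, nLeaves, Multiset.card_add, card_labels l, card_labels r]

theorem one_le_nLeaves : ∀ r : RTree α, 1 ≤ r.nLeaves
  | .leaf _ => le_refl 1
  | .node l r => le_trans (one_le_nLeaves l) (Nat.le_add_right _ _)

theorem labels_ne_zero (r : RTree α) : r.labels ≠ 0 := by
  intro h
  have := card_labels r
  rw [h] at this
  simp at this
  have := one_le_nLeaves r
  omega

/-! ### sameShape lemmas -/

theorem sameShape_refl : ∀ u : RTree Unit, sameShape u u = true
  | .leaf _ => rfl
  | .node l r => by
    simp [sameShape, sameShape_refl l, sameShape_refl r]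

theorem sameShape_symm : ∀ {u v : RTree Unit}, sameShape u v = true → sameShape v u = true
  | .leaf _, .leaf _, _ => rfl
  | .leaf _, .node _ _, h => by simp [sameShape] at h
  | .node _ _, .leaf _, h => by simp [sameShape] at h
  | .node l r, .node l' r', h => by
    simp only [sameShape, Bool.or_eq_true, Bool.and_eq_true] at h ⊢
    rcases h with ⟨h₁, h₂⟩ | ⟨h₁, h₂⟩
    · exact .inl ⟨sameShape_symm h₁, sameShape_symm h₂⟩
    · exact .inr ⟨sameShape_symm h₂, sameShape_symm h₁⟩

theorem sameShape_trans : ∀ {u v w : RTree Unit},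
    sameShape u v = true → sameShape v w = true → sameShape u w = true
  | .leaf _, .leaf _, .leaf _, _, _ => rfl
  | .leaf _, .leaf _, .node _ _, _, h => by simp [sameShape] at h
  | .leaf _, .node _ _, _, h, _ => by simp [sameShape] at h
  | .node _ _, .leaf _, _, h, _ => by simp [sameShape] at h
  | .node _ _, .node _ _, .leaf _, _, h => by simp [sameShape] at h
  | .node l r, .node l' r', .node l'' r'', h₁, h₂ => by
    simp only [sameShape, Bool.or_eq_true, Bool.and_eq_true] at h₁ h₂ ⊢
    rcases h₁ with ⟨a₁, a₂⟩ | ⟨a₁, a₂⟩ <;> rcases h₂ with ⟨b₁, b₂⟩ | ⟨b₁, b₂⟩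
    · exact .inl ⟨sameShape_trans a₁ b₁, sameShape_trans a₂ b₂⟩
    · exact .inr ⟨sameShape_trans a₁ b₁, sameShape_trans a₂ b₂⟩
    · exact .inr ⟨sameShape_trans a₁ b₂, sameShape_trans a₂ b₁⟩
    · exact .inl ⟨sameShape_trans a₁ b₂, sameShape_trans a₂ b₁⟩

theorem nLeaves_congr : ∀ {u v : RTree Unit}, sameShape u v = true → u.nLeaves = v.nLeaves
  | .leaf _, .leaf _, _ => rfl
  | .leaf _, .node _ _, h => by simp [sameShape] at h
  | .node _ _, .leaf _, h => by simp [sameShape] at h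
  | .node l r, .node l' r', h => by
    simp only [sameShape, Bool.or_eq_true, Bool.and_eq_true] at h
    rcases h with ⟨h₁, h₂⟩ | ⟨h₁, h₂⟩
    · simp [nLeaves, nLeaves_congr h₁, nLeaves_congr h₂]
    · simp [nLeaves, nLeaves_congr h₁, nLeaves_congr h₂, Nat.add_comm]

theorem symCount_congr : ∀ {u v : RTree Unit}, sameShape u v = true → u.symCount = v.symCount
  | .leaf _, .leaf _, _ => rfl
  | .leaf _, .node _ _, h => by simp [sameShape] at h
  | .node _ _, .leaf _, h => by simp [sameShape] at h
  | .node l r, .node l' r', h => by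
    simp only [sameShape, Bool.or_eq_true, Bool.and_eq_true] at h
    rcases h with ⟨h₁, h₂⟩ | ⟨h₁, h₂⟩
    · have hif : sameShape l r = sameShape l' r' := by
        by_cases hc : sameShape l' r' = true
        · rw [hc]
          exact sameShape_trans (sameShape_trans h₁ hc) (sameShape_symm h₂)
        · simp only [Bool.not_eq_true] at hc
          rw [hc]
          by_contra hcc
          simp only [Bool.not_eq_false] at hcc
          exact absurd (sameShape_trans (sameShape_trans (sameShape_symm h₁) hcc) h₂)
            (by simp [hc])
      simp [symCount, symCount_congr h₁, symCount_congr h₂, hif]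
    · have hif : sameShape l r = sameShape l' r' := by
        by_cases hc : sameShape l' r' = true
        · rw [hc]
          exact sameShape_trans (sameShape_trans h₁ (sameShape_symm hc)) (sameShape_symm h₂)
        · simp only [Bool.not_eq_true] at hc
          rw [hc]
          by_contra hcc
          simp only [Bool.not_eq_false] at hcc
          exact absurd (sameShape_trans (sameShape_symm h₂)
            (sameShape_trans (sameShape_symm hcc) h₁)) (by simp [hc])
      rw [symCount, symCount, symCount_congr h₁, symCount_congr h₂, hif]
      ring

theorem sameShape_of_iso {r₁ r₂ : RTree α} (h : Iso r₁ r₂) :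
    sameShape r₁.shape r₂.shape = true := by
  induction h with
  | leaf a => rfl
  | node _ _ ih₁ ih₂ =>
    rw [shape_node, shape_node]
    simp only [sameShape, Bool.or_eq_true, Bool.and_eq_true]
    exact .inl ⟨ih₁, ih₂⟩
  | swap _ _ ih₁ ih₂ =>
    rw [shape_node, shape_node]
    simp only [sameShape, Bool.or_eq_true, Bool.and_eq_true]
    exact .inr ⟨ih₁, ih₂⟩

theorem exists_rep : ∀ (r : RTree α) (u : RTree Unit), sameShape r.shape u = true →
    ∃ r', Iso r' r ∧ r'.shape = u
  | .leaf a, .leaf _, _ => ⟨.leaf a, .leaf a, rfl⟩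
  | .leaf _, .node _ _, h => by simp [shape_leaf, sameShape] at h
  | .node _ _, .leaf _, h => by simp [shape_node, sameShape] at h
  | .node r₁ r₂, .node u₁ u₂, h => by
    rw [shape_node] at h
    simp only [sameShape, Bool.or_eq_true, Bool.and_eq_true] at h
    rcases h with ⟨h₁, h₂⟩ | ⟨h₁, h₂⟩
    · obtain ⟨a, ha, ha'⟩ := exists_rep r₁ u₁ h₁
      obtain ⟨b, hb, hb'⟩ := exists_rep r₂ u₂ h₂
      exact ⟨.node a b, .node ha hb, by rw [shape_node, ha', hb']⟩
    · obtain ⟨a, ha, ha'⟩ := exists_rep r₁ u₂ h₁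
      obtain ⟨b, hb, hb'⟩ := exists_rep r₂ u₁ h₂
      exact ⟨.node b a, .swap hb ha, by rw [shape_node, ha', hb']⟩

/-! ### Finiteness of isomorphism classes -/

theorem setOf_iso_finite : ∀ r : RTree α, {r' | Iso r' r}.Finite
  | .leaf a => Set.Finite.subset (Set.finite_singleton (.leaf a)) (by
      rintro x hx
      rw [iso_leaf hx]
      simp)
  | .node r₁ r₂ => by
    have h₁ := setOf_iso_finite r₁
    have h₂ := setOf_iso_finite r₂
    refine Set.Finite.subset (Set.Finite.image
      (fun p : RTree α × RTree α => RTree.node p.1 p.2)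
      (Set.Finite.prod (h₁.union h₂) (h₁.union h₂))) ?_
    rintro x hx
    obtain ⟨a, b, rfl, hab⟩ := iso_node hx
    rcases hab with ⟨ha, hb⟩ | ⟨ha, hb⟩
    · exact ⟨(a, b), ⟨.inl ha, .inr hb⟩, rfl⟩
    · exact ⟨(a, b), ⟨.inr ha, .inl hb⟩, rfl⟩

theorem fiber_finite (x : RTree α) (u : RTree Unit) :
    Finite {r' : RTree α // r'.shape = u ∧ Iso r' x} := by
  have : {r' : RTree α | r'.shape = u ∧ Iso r' x}.Finite :=
    Set.Finite.subset (setOf_iso_finite x) (fun r hr => hr.2)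
  exact this.to_subtype

theorem not_iso_both {r₁ r₂ x : RTree α} (hnd : (labels (.node r₁ r₂)).Nodup)
    (h₁ : Iso x r₁) (h₂ : Iso x r₂) : False := by
  have heq : r₁.labels = r₂.labels := h₁.labels_eq.symm.trans h₂.labels_eq
  rw [show labels (RTree.node r₁ r₂) = r₁.labels + r₂.labels from rfl,
    Multiset.nodup_add] at hnd
  obtain ⟨c, hc⟩ := Multiset.exists_mem_of_ne_zero (labels_ne_zero r₁)
  exact absurd (by rw [← heq]; exact hc) (Multiset.disjoint_left.mp hnd.2.2 hc)

/-! ### Fiber cardinality -/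

theorem card_fiber_zero {x : RTree α} {u : RTree Unit} (h : ¬ sameShape x.shape u = true) :
    Nat.card {r' : RTree α // r'.shape = u ∧ Iso r' x} = 0 := by
  have : IsEmpty {r' : RTree α // r'.shape = u ∧ Iso r' x} := by
    refine ⟨fun r => h ?_⟩
    have := sameShape_of_iso r.2.2.symm'
    rw [r.2.1] at this
    exact this
  simp [Nat.card_of_isEmpty]

theorem card_fiber : ∀ (x : RTree α) (u : RTree Unit), (labels x).Nodup →
    sameShape x.shape u = true →
    Nat.card {r' : RTree α // r'.shape = u ∧ Iso r' x} = 2 ^ u.symCount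
  | .leaf a, .leaf _, _, _ => by
    have h1 : Nonempty {r' : RTree α // r'.shape = .leaf () ∧ Iso r' (.leaf a)} :=
      ⟨⟨.leaf a, rfl, .leaf a⟩⟩
    have h2 : Subsingleton {r' : RTree α // r'.shape = .leaf () ∧ Iso r' (.leaf a)} := by
      constructor
      rintro ⟨r, hrs, hr⟩ ⟨r', hrs', hr'⟩
      exact Subtype.ext ((iso_leaf hr).trans (iso_leaf hr').symm)
    rw [Nat.card_eq_one_iff_unique.mpr ⟨h2, h1⟩]
    rfl
  | .leaf _, .node _ _, _, h => by simp [shape_leaf, sameShape] at h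
  | .node _ _, .leaf _, _, h => by simp [shape_node, sameShape] at h
  | .node r₁ r₂, .node u₁ u₂, hnd, h => by
    have hnd₁ : (labels r₁).Nodup ∧ (labels r₂).Nodup := by
      rw [show labels (RTree.node r₁ r₂) = r₁.labels + r₂.labels from rfl,
        Multiset.nodup_add] at hnd
      exact ⟨hnd.1, hnd.2.1⟩
    -- the bijection
    have hψ : Function.Bijective
        (fun y : ({a : RTree α // a.shape = u₁ ∧ Iso a r₁} × {b : RTree α // b.shape = u₂ ∧ Iso b r₂})
          ⊕ ({a : RTree α // a.shape = u₁ ∧ Iso a r₂} × {b : RTree α // b.shape = u₂ ∧ Iso b r₁}) =>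
          (match y with
          | .inl (a, b) => ⟨.node a.1 b.1,
              by rw [shape_node, a.2.1, b.2.1], .node a.2.2 b.2.2⟩
          | .inr (a, b) => ⟨.node a.1 b.1,
              by rw [shape_node, a.2.1, b.2.1], .swap a.2.2 b.2.2⟩ :
            {r' : RTree α // r'.shape = .node u₁ u₂ ∧ Iso r' (.node r₁ r₂)})) := by
      constructor
      · rintro (⟨a, b⟩ | ⟨a, b⟩) (⟨a', b'⟩ | ⟨a', b'⟩) hy <;>
          simp only [Subtype.mk.injEq, RTree.node.injEq] at hy
        · rw [Sum.inl.injEq, Prod.mk.injEq]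
          exact ⟨Subtype.ext hy.1, Subtype.ext hy.2⟩
        · exact absurd (hy.1 ▸ a.2.2) (fun hh => not_iso_both hnd hh a'.2.2)
        · exact absurd (hy.1 ▸ a.2.2) (fun hh => not_iso_both hnd a'.2.2 hh)
        · rw [Sum.inr.injEq, Prod.mk.injEq]
          exact ⟨Subtype.ext hy.1, Subtype.ext hy.2⟩
      · rintro ⟨r', hsh, hiso⟩
        obtain ⟨a, b, rfl, hab⟩ := iso_node hiso
        rw [shape_node, RTree.node.injEq] at hsh
        rcases hab with ⟨ha, hb⟩ | ⟨ha, hb⟩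
        · exact ⟨.inl (⟨a, hsh.1, ha⟩, ⟨b, hsh.2, hb⟩), rfl⟩
        · exact ⟨.inr (⟨a, hsh.1, ha⟩, ⟨b, hsh.2, hb⟩), rfl⟩
    have := fiber_finite r₁ u₁; have := fiber_finite r₂ u₂
    have := fiber_finite r₂ u₁; have := fiber_finite r₁ u₂
    have hcard := Nat.card_congr (Equiv.ofBijective _ hψ)
    rw [Nat.card_sum, Nat.card_prod, Nat.card_prod] at hcard
    rw [shape_node] at h
    simp only [sameShape, Bool.or_eq_true, Bool.and_eq_true] at h
    rw [← hcard]
    by_cases hS : sameShape u₁ u₂ = true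
    · have hA : sameShape r₁.shape u₁ = true := by
        rcases h with ⟨h₁, _⟩ | ⟨h₁, _⟩
        · exact h₁
        · exact sameShape_trans h₁ (sameShape_symm hS)
      have hB : sameShape r₂.shape u₂ = true := by
        rcases h with ⟨_, h₂⟩ | ⟨_, h₂⟩
        · exact h₂
        · exact sameShape_trans h₂ hS
      have hC : sameShape r₁.shape u₂ = true := sameShape_trans hA hS
      have hD : sameShape r₂.shape u₁ = true := sameShape_trans hB (sameShape_symm hS)
      rw [card_fiber r₁ u₁ hnd₁.1 hA, card_fiber r₂ u₂ hnd₁.2 hB,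
        card_fiber r₂ u₁ hnd₁.2 hD, card_fiber r₁ u₂ hnd₁.1 hC]
      have : symCount u₂ = symCount u₁ := symCount_congr (sameShape_symm hS)
      rw [this]
      simp only [symCount, hS, if_true]
      rw [this]
      ring
    · rw [symCount]
      rcases h with ⟨h₁, h₂⟩ | ⟨h₁, h₂⟩
      · have hC : ¬ sameShape r₁.shape u₂ = true := fun hc =>
          hS (sameShape_trans (sameShape_symm h₁) hc)
        rw [card_fiber r₁ u₁ hnd₁.1 h₁, card_fiber r₂ u₂ hnd₁.2 h₂, card_fiber_zero hC]
        simp [hS, pow_add]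
      · have hA : ¬ sameShape r₁.shape u₁ = true := fun hc =>
          hS (sameShape_trans (sameShape_symm hc) h₁)
        rw [card_fiber r₂ u₁ hnd₁.2 h₂, card_fiber r₁ u₂ hnd₁.1 h₁, card_fiber_zero hA]
        simp [hS, pow_add]

/-! ### Leaf lists and decorated trees -/

def leafList : RTree α → List α
  | .leaf a => [a]
  | .node l r => leafList l ++ leafList r

theorem length_leafList : ∀ r : RTree α, r.leafList.length = r.nLeaves
  | .leaf _ => rfl
  | .node l r => by
    simp [leafList, nLeaves, length_leafList l, length_leafList r]

theorem labels_eq_leafList : ∀ r : RTree α, r.labels = (r.leafList : Multiset α)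
  | .leaf _ => rfl
  | .node l r => by
    rw [show labels (RTree.node l r) = l.labels + r.labels from rfl,
      labels_eq_leafList l, labels_eq_leafList r, leafList]
    simp

def build [Inhabited α] : RTree Unit → List α → RTree α
  | .leaf _, L => .leaf L.headI
  | .node t₁ t₂, L => .node (build t₁ (L.take t₁.nLeaves)) (build t₂ (L.drop t₁.nLeaves))

theorem shape_build [Inhabited α] : ∀ (t : RTree Unit) (L : List α),
    L.length = t.nLeaves → (build t L).shape = t
  | .leaf _, _, _ => rfl
  | .node t₁ t₂, L, hL => by
    rw [nLeaves] at hL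
    rw [build, shape_node, shape_build t₁ _ (by simp [hL]),
      shape_build t₂ _ (by simp [hL])]

theorem leafList_build [Inhabited α] : ∀ (t : RTree Unit) (L : List α),
    L.length = t.nLeaves → (build t L).leafList = L
  | .leaf _, L, hL => by
    rw [nLeaves] at hL
    obtain ⟨a, rfl⟩ := List.length_eq_one_iff.mp hL
    rfl
  | .node t₁ t₂, L, hL => by
    rw [nLeaves] at hL
    rw [build, leafList, leafList_build t₁ _ (by simp [hL]),
      leafList_build t₂ _ (by simp [hL]), List.take_append_drop]

theorem build_leafList [Inhabited α] : ∀ (r : RTree α) (t : RTree Unit),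
    r.shape = t → build t r.leafList = r
  | .leaf a, t, h => by
    subst h
    rfl
  | .node l r, t, h => by
    subst h
    rw [shape_node, build, leafList]
    have h1 : (shape l).nLeaves = l.leafList.length := by rw [nLeaves_shape, length_leafList]
    rw [h1, List.take_left, List.drop_left, build_leafList l _ rfl, build_leafList r _ rfl]

end RTree
theorem RTreeAux.finite_lists {α : Type} (m : Multiset α) :
    Finite {L : List α // (L : Multiset α) = m} := by
  classical
  have hfin : Finite {x // x ∈ m.toList.permutations} :=
    (m.toList.permutations.finite_toSet).to_subtype
  refine Finite.of_injective (β := {x // x ∈ m.toList.permutations})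
    (fun y => ⟨y.1, ?_⟩) ?_
  · rw [List.mem_permutations, ← Multiset.coe_eq_coe, Multiset.coe_toList, y.2]
  · intro a b h
    simpa [Subtype.ext_iff] using h

theorem RTreeAux.card_lists {α : Type} [DecidableEq α] (m : Multiset α) (hm : m.Nodup) :
    Nat.card {L : List α // (L : Multiset α) = m} = Nat.factorial (Multiset.card m) := by
  classical
  have e : {L : List α // (L : Multiset α) = m} ≃
      {L : List α // L ∈ m.toList.permutations.toFinset} :=
    Equiv.subtypeEquivRight (fun L => by
      rw [List.mem_toFinset, List.mem_permutations, ← Multiset.coe_eq_coe,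
        Multiset.coe_toList])
  rw [Nat.card_congr e, Nat.card_eq_fintype_card, Fintype.card_coe,
    List.toFinset_card_of_nodup (List.nodup_permutations _ (Multiset.coe_nodup.mp (by rwa [Multiset.coe_toList]))),
    List.length_permutations, Multiset.length_toList]

theorem RTree.symCount_lt_nLeaves : ∀ u : RTree Unit, u.symCount + 1 ≤ u.nLeaves
  | .leaf _ => le_refl 1
  | .node l r => by
    have hl := symCount_lt_nLeaves l
    have hr := symCount_lt_nLeaves r
    rw [symCount, nLeaves]
    split <;> omega

/-- The number of rooted binary phylogenetic trees on `[s]` with a given shape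
`t` (a tree shape with `s` leaves) is `s!/2^m` where `m` is the number of
symmetry vertices of `t`; consequently it is at least `s!/2^(s-1)`. -/
theorem count_trees_with_shape (s : ℕ) (hs : 1 ≤ s) (t : RTree Unit)
    (ht : t.nLeaves = s) :
    Nat.card {T : RB s // HasShape s t T} * 2 ^ t.symCount =
        Nat.factorial s ∧
    Nat.factorial s ≤ Nat.card {T : RB s // HasShape s t T} * 2 ^ (s - 1) := by
  classical
  haveI : Inhabited (Fin s) := ⟨⟨0, hs⟩⟩
  have hnd : ((Finset.univ : Finset (Fin s)).val).Nodup := Finset.univ.nodup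
  -- the type of plane trees with exact shape t and full distinct labels
  let Pt := {r : RTree (Fin s) // r.shape = t ∧ r.labels = (Finset.univ : Finset (Fin s)).val}
  let Qt := {T : RB s // HasShape s t T}
  -- Pt is equivalent to lists realising univ.val
  let eP : Pt ≃ {L : List (Fin s) // (L : Multiset (Fin s)) = (Finset.univ : Finset (Fin s)).val} :=
    { toFun := fun x => ⟨RTree.leafList x.1, by
        rw [← RTree.labels_eq_leafList]; exact x.2.2⟩
      invFun := fun y => ⟨RTree.build t y.1,
        RTree.shape_build t y.1 (by
          rw [← Multiset.coe_card, y.2]; simp [ht]),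
        by
          rw [RTree.labels_eq_leafList, RTree.leafList_build t y.1 (by
            rw [← Multiset.coe_card, y.2]; simp [ht]), y.2]⟩
      left_inv := fun x => Subtype.ext (RTree.build_leafList x.1 t x.2.1)
      right_inv := fun y => Subtype.ext (RTree.leafList_build t y.1 (by
        rw [← Multiset.coe_card, y.2]; simp [ht])) }
  have hPcard : Nat.card Pt = Nat.factorial s := by
    rw [Nat.card_congr eP, RTreeAux.card_lists _ hnd]
    congr 1
    simp
  haveI := RTreeAux.finite_lists ((Finset.univ : Finset (Fin s)).val)
  haveI hPfin : Finite Pt := Finite.of_equiv _ eP.symm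
  -- the projection
  let φ : Pt → Qt := fun x => ⟨⟨Quot.mk _ x.1, x.2.2⟩,
    ⟨x.1, rfl, by rw [x.2.1]; exact RTree.sameShape_refl t⟩⟩
  have hsurj : Function.Surjective φ := by
    rintro ⟨⟨T, hT⟩, r₀, hq, hss⟩
    obtain ⟨r', hiso, hsh⟩ := RTree.exists_rep r₀ t hss
    have hlab : r'.labels = (Finset.univ : Finset (Fin s)).val := by
      rw [hiso.labels_eq]
      have : QTree.labels (Quot.mk _ r₀) = r₀.labels := rfl
      rw [← this, hq]
      exact hT
    refine ⟨⟨r', hsh, hlab⟩, ?_⟩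
    apply Subtype.ext
    apply Subtype.ext
    show Quot.mk _ r' = T
    exact (Quot.sound hiso).trans hq
  haveI hQfin : Finite Qt := Finite.of_surjective φ hsurj
  haveI := Fintype.ofFinite Qt
  -- each fiber has cardinality 2 ^ symCount t
  have hfiber : ∀ T : Qt, Nat.card {p : Pt // φ p = T} = 2 ^ t.symCount := by
    intro T
    obtain ⟨p₀, rfl⟩ := hsurj T
    have e : {p : Pt // φ p = φ p₀} ≃ {r : RTree (Fin s) // r.shape = t ∧ RTree.Iso r p₀.1} :=
      { toFun := fun p => ⟨p.1.1, p.1.2.1, by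
          have h := congrArg (fun q : Qt => q.1.1) p.2
          exact RTree.quot_mk_eq_iff.mp h⟩
        invFun := fun r => ⟨⟨r.1, r.2.1, by rw [r.2.2.labels_eq]; exact p₀.2.2⟩, by
          apply Subtype.ext; apply Subtype.ext
          exact Quot.sound r.2.2⟩
        left_inv := fun p => by apply Subtype.ext; apply Subtype.ext; rfl
        right_inv := fun r => by apply Subtype.ext; rfl }
    rw [Nat.card_congr e]
    exact RTree.card_fiber p₀.1 t (by rw [p₀.2.2]; exact hnd)
      (by rw [p₀.2.1]; exact RTree.sameShape_refl t)
  -- sum over fibers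
  have hsum : Nat.card Pt = Nat.card Qt * 2 ^ t.symCount := by
    haveI : ∀ T : Qt, Fintype {p : Pt // φ p = T} := fun T =>
      Fintype.ofFinite _
    haveI : Fintype Pt := Fintype.ofFinite _
    rw [Nat.card_congr (Equiv.sigmaFiberEquiv φ).symm, Nat.card_eq_fintype_card,
      Fintype.card_sigma, Nat.card_eq_fintype_card]
    have hfib' : ∀ i : Qt, Fintype.card {x : Pt // φ x = i} = 2 ^ t.symCount := fun i => by
      rw [← Nat.card_eq_fintype_card]; exact hfiber i
    simp only [hfib']
    rw [Finset.sum_const, smul_eq_mul, Finset.card_univ]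
  have key : Nat.card Qt * 2 ^ t.symCount = Nat.factorial s := by rw [← hsum, hPcard]
  refine ⟨key, ?_⟩
  have hm : t.symCount ≤ s - 1 := by
    have := RTree.symCount_lt_nLeaves t
    omega
  calc Nat.factorial s = Nat.card Qt * 2 ^ t.symCount := key.symm
    _ ≤ Nat.card Qt * 2 ^ (s - 1) :=
      Nat.mul_le_mul_left _ (Nat.pow_le_pow_right (by norm_num) hm)
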